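/- arXiv:1701.01111 — 8 statements merged into one kernel-verified Lean document; each statement's English description precedes it below -/
import Mathlib

section
/- Let n ≥ 2 be a natural number. The n-th approximation number of the Volterra operator V : L¹(0,1) → C[0,1] equals 1/2, i.e., the infimum of ‖V − F‖ over all bounded linear operators F : L¹(0,1) → C[0,1] with rank F < n equals 1/2. -/
open MeasureTheory

noncomputable section

/-- The space `L¹(0,1)` of Lebesgue integrable functions on `(0,1)`. -/
abbrev L1 : Type := Lp ℝ 1 ((volume : Measure ℝ).restrict (Set.Ioo (0:ℝ) 1))

/-- The space `C[0,1]` of continuous real functions on `[0,1]` with the supremum norm. -/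
abbrev C01 : Type := C(Set.Icc (0:ℝ) 1, ℝ)

/-- `V` is the Volterra operator: `(V f)(t) = ∫₀ᵗ f(s) ds` for `f ∈ L¹(0,1)`. -/
def IsVolterra (V : L1 →L[ℝ] C01) : Prop :=
  ∀ f : L1, ∀ t : Set.Icc (0:ℝ) 1,
    V f t = ∫ s in Set.Ioo (0:ℝ) (t:ℝ), f s
      ∂((volume : Measure ℝ).restrict (Set.Ioo (0:ℝ) 1))

/-!
The operator `f ↦ (∫ f) / 2`, taking values in the constants, has rank one and approximates `V`
to within `1/2`: `(Vf)(t) - (∫ f)/2` is half the difference of the integrals of `f` over `(0,t)`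
and over its complement, so it is bounded by `‖f‖₁ / 2`.

Conversely, the normalised indicators `fₖ` of the dyadic intervals `(2^{-k-2}, 2^{-k-1})` have
norm one, and for `k < j` the functions `Vfⱼ` and `Vfₖ` take the values `1` and `0` at `2^{-k-2}`.
A finite-rank operator `A` maps `(fₖ)` to a bounded sequence in a finite-dimensional space, so
two of the `Afₖ` are arbitrarily close, and the triangle inequality forces `1 ≤ 2 ‖V - A‖`.
-/

open Set

local notation "μ₀" => Measure.restrict (volume : Measure ℝ) (Ioo (0 : ℝ) 1)

section FiniteRank

variable {𝕜 E F : Type*} [RCLike 𝕜] [NormedAddCommGroup E] [NormedSpace 𝕜 E]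
  [NormedAddCommGroup F] [NormedSpace 𝕜 F]

theorem ContinuousLinearMap.exists_lt_norm_apply_sub_lt_of_finiteDimensional_range
    (A : E →L[𝕜] F) [FiniteDimensional 𝕜 (LinearMap.range (A : E →ₗ[𝕜] F))]
    {x : ℕ → E} {C : ℝ} (hx : ∀ k, ‖x k‖ ≤ C) {ε : ℝ} (hε : 0 < ε) :
    ∃ k j, k < j ∧ ‖A (x j) - A (x k)‖ < ε := by
  let y : ℕ → LinearMap.range (A : E →ₗ[𝕜] F) := fun k => ⟨A (x k), LinearMap.mem_range_self _ _⟩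
  have hy : ∀ k, y k ∈ Metric.closedBall 0 (‖A‖ * C) := fun k => by
    simpa using A.le_opNorm_of_le (hx k)
  obtain ⟨_, _, φ, hφ, hlim⟩ := tendsto_subseq_of_bounded Metric.isBounded_closedBall hy
  obtain ⟨N, hN⟩ := Metric.cauchySeq_iff'.mp hlim.cauchySeq ε hε
  refine ⟨φ N, φ (N + 1), hφ N.lt_succ_self, ?_⟩
  simpa [Subtype.dist_eq, dist_eq_norm, y] using hN (N + 1) N.le_succ

theorem ContinuousLinearMap.le_two_mul_opNorm_sub_of_separated (T A : E →L[𝕜] F)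
    [FiniteDimensional 𝕜 (LinearMap.range (A : E →ₗ[𝕜] F))] {x : ℕ → E} (hx : ∀ k, ‖x k‖ ≤ 1)
    {δ : ℝ} (hsep : ∀ k j, k < j → δ ≤ ‖T (x j) - T (x k)‖) : δ ≤ 2 * ‖T - A‖ := by
  by_contra! h
  obtain ⟨k, j, hkj, hclose⟩ :=
    A.exists_lt_norm_apply_sub_lt_of_finiteDimensional_range hx (sub_pos.mpr h)
  have hbound : ∀ i, ‖(T - A) (x i)‖ ≤ ‖T - A‖ := fun i => by
    simpa using (T - A).le_opNorm_of_le (hx i)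
  have hsplit : T (x j) - T (x k) = (A (x j) - A (x k)) + ((T - A) (x j) - (T - A) (x k)) := by
    simp only [sub_apply]; abel
  have := hsep k j hkj
  rw [hsplit] at this
  linarith [norm_add_le (A (x j) - A (x k)) ((T - A) (x j) - (T - A) (x k)),
    norm_sub_le ((T - A) (x j)) ((T - A) (x k)), hbound j, hbound k]

end FiniteRank

theorem norm_setIntegral_sub_half_integral_le {α : Type*} [MeasurableSpace α] {μ : Measure α}
    {f : α → ℝ} (hf : Integrable f μ) {s : Set α} (hs : MeasurableSet s) :
    ‖∫ x in s, f x ∂μ - (∫ x, f x ∂μ) / 2‖ ≤ (∫ x, ‖f x‖ ∂μ) / 2 := by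
  rw [← integral_add_compl hs hf, ← integral_add_compl hs hf.norm, Real.norm_eq_abs, abs_le]
  have hin := abs_le.mp (norm_integral_le_integral_norm (μ := μ.restrict s) f)
  have hout := abs_le.mp (norm_integral_le_integral_norm (μ := μ.restrict sᶜ) f)
  constructor <;> linarith [hin.1, hin.2, hout.1, hout.2]

theorem LinearMap.rank_smulRight_le_one {K M N : Type*} [Field K] [AddCommGroup M] [Module K M]
    [AddCommGroup N] [Module K N] (f : M →ₗ[K] K) (y : N) : (f.smulRight y).rank ≤ 1 := by
  have hrange : LinearMap.range (f.smulRight y) ≤ Submodule.span K {y} := by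
    rintro _ ⟨x, rfl⟩
    exact Submodule.smul_mem _ _ (Submodule.mem_span_singleton_self y)
  simpa using (Submodule.rank_mono hrange).trans (rank_span_le {y})

def halfIntegral : L1 →L[ℝ] C01 := L1.integralCLM.smulRight ((1 / 2 : ℝ) • (1 : C01))

theorem halfIntegral_apply (f : L1) (t : Icc (0 : ℝ) 1) :
    halfIntegral f t = (∫ x, f x ∂μ₀) / 2 := by
  simp [halfIntegral, ← L1.integral_eq, L1.integral_eq_integral, div_eq_mul_inv, mul_comm]

theorem rank_halfIntegral_le_one : LinearMap.rank (halfIntegral : L1 →ₗ[ℝ] C01) ≤ 1 :=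
  LinearMap.rank_smulRight_le_one _ _

theorem opNorm_sub_halfIntegral_le {V : L1 →L[ℝ] C01} (hV : IsVolterra V) :
    ‖V - halfIntegral‖ ≤ 1 / 2 := by
  refine ContinuousLinearMap.opNorm_le_bound _ (by norm_num) fun f => ?_
  refine (ContinuousMap.norm_le _ (by positivity)).mpr fun t => ?_
  rw [sub_apply, ContinuousMap.sub_apply, hV, halfIntegral_apply,
    L1.norm_eq_integral_norm]
  linarith [norm_setIntegral_sub_half_integral_le (L1.integrable_coeFn f)
    (measurableSet_Ioo (a := (0 : ℝ)) (b := t))]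

def normalizedIndicator (a b : ℝ) : L1 :=
  indicatorConstLp 1 measurableSet_Ioo (measure_ne_top μ₀ (Ioo a b)) (b - a)⁻¹

section NormalizedIndicator

variable {a b : ℝ}

theorem measureReal_Ioo_of_subset_unitInterval (ha : 0 ≤ a) (hab : a ≤ b) (hb : b ≤ 1) :
    (μ₀).real (Ioo a b) = b - a := by
  rw [measureReal_restrict_apply measurableSet_Ioo, inter_eq_left.mpr (Ioo_subset_Ioo ha hb),
    Real.volume_real_Ioo_of_le hab]

theorem norm_normalizedIndicator (ha : 0 ≤ a) (hab : a < b) (hb : b ≤ 1) :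
    ‖normalizedIndicator a b‖ = 1 := by
  rw [normalizedIndicator, norm_indicatorConstLp one_ne_zero ENNReal.one_ne_top,
    measureReal_Ioo_of_subset_unitInterval ha hab.le hb, Real.norm_eq_abs, abs_inv,
    abs_of_pos (sub_pos.mpr hab)]
  simp [(sub_pos.mpr hab).ne']

theorem setIntegral_normalizedIndicator {s : Set ℝ} (hs : MeasurableSet s) :
    ∫ x in s, normalizedIndicator a b x ∂μ₀ = (μ₀).real (Ioo a b ∩ s) / (b - a) := by
  rw [normalizedIndicator, setIntegral_indicatorConstLp hs, smul_eq_mul, div_eq_mul_inv]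

theorem volterra_normalizedIndicator_of_le {V : L1 →L[ℝ] C01} (hV : IsVolterra V)
    {t : Icc (0 : ℝ) 1} (ht : (t : ℝ) ≤ a) : V (normalizedIndicator a b) t = 0 := by
  have hdisj : Ioo a b ∩ Ioo 0 (t : ℝ) = ∅ :=
    eq_empty_of_forall_notMem fun x hx => (hx.1.1.trans hx.2.2).not_ge ht
  rw [hV, setIntegral_normalizedIndicator measurableSet_Ioo, hdisj]
  simp

theorem volterra_normalizedIndicator_of_ge {V : L1 →L[ℝ] C01} (hV : IsVolterra V)
    (ha : 0 ≤ a) (hab : a < b) {t : Icc (0 : ℝ) 1} (ht : b ≤ t) :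
    V (normalizedIndicator a b) t = 1 := by
  rw [hV, setIntegral_normalizedIndicator measurableSet_Ioo,
    inter_eq_left.mpr (Ioo_subset_Ioo ha ht),
    measureReal_Ioo_of_subset_unitInterval ha hab.le (ht.trans t.2.2),
    div_self (sub_pos.mpr hab).ne']

end NormalizedIndicator

def dyadicIndicator (k : ℕ) : L1 := normalizedIndicator ((1 / 2) ^ (k + 2)) ((1 / 2) ^ (k + 1))

theorem half_pow_mem_Icc (k : ℕ) : (1 / 2 : ℝ) ^ k ∈ Icc (0 : ℝ) 1 :=
  ⟨by positivity, pow_le_one₀ (by norm_num) (by norm_num)⟩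

theorem half_pow_succ_lt_half_pow (k : ℕ) : (1 / 2 : ℝ) ^ (k + 1) < (1 / 2) ^ k :=
  pow_lt_pow_right_of_lt_one₀ (by norm_num) (by norm_num) (by omega)

theorem norm_dyadicIndicator (k : ℕ) : ‖dyadicIndicator k‖ = 1 :=
  norm_normalizedIndicator (half_pow_mem_Icc _).1 (half_pow_succ_lt_half_pow _)
    (half_pow_mem_Icc _).2

theorem one_le_norm_volterra_dyadicIndicator_sub {V : L1 →L[ℝ] C01} (hV : IsVolterra V)
    {k j : ℕ} (hkj : k < j) : 1 ≤ ‖V (dyadicIndicator j) - V (dyadicIndicator k)‖ := by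
  let t : Icc (0 : ℝ) 1 := ⟨_, half_pow_mem_Icc (k + 2)⟩
  have hj : V (dyadicIndicator j) t = 1 :=
    volterra_normalizedIndicator_of_ge hV (half_pow_mem_Icc _).1 (half_pow_succ_lt_half_pow _)
      (pow_le_pow_of_le_one (by norm_num) (by norm_num) (by omega))
  have hk : V (dyadicIndicator k) t = 0 := volterra_normalizedIndicator_of_le hV le_rfl
  simpa [hj, hk] using
    ContinuousMap.norm_coe_le_norm (V (dyadicIndicator j) - V (dyadicIndicator k)) t

theorem half_le_opNorm_sub_of_rank_lt_aleph0 {V : L1 →L[ℝ] C01} (hV : IsVolterra V)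
    (A : L1 →L[ℝ] C01) (hA : LinearMap.rank (A : L1 →ₗ[ℝ] C01) < Cardinal.aleph0) :
    1 / 2 ≤ ‖V - A‖ := by
  have : FiniteDimensional ℝ (LinearMap.range (A : L1 →ₗ[ℝ] C01)) :=
    Module.rank_lt_aleph0_iff.mp hA
  have := V.le_two_mul_opNorm_sub_of_separated A (fun k => (norm_dyadicIndicator k).le)
    fun _ _ => one_le_norm_volterra_dyadicIndicator_sub hV
  linarith

/-- The `n`-th approximation number of the Volterra operator `V : L¹(0,1) → C[0,1]`
equals `1/2` for `n ≥ 2`. -/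
theorem approximation_number_volterra (n : ℕ) (hn : 2 ≤ n)
    (V : L1 →L[ℝ] C01) (hV : IsVolterra V) :
    sInf {r : ℝ | ∃ F : L1 →L[ℝ] C01,
        LinearMap.rank (F : L1 →ₗ[ℝ] C01) < (n : Cardinal) ∧ r = ‖V - F‖} = 1 / 2 := by
  have hlower : ∀ F : L1 →L[ℝ] C01, LinearMap.rank (F : L1 →ₗ[ℝ] C01) < n → 1 / 2 ≤ ‖V - F‖ :=
    fun F hF => half_le_opNorm_sub_of_rank_lt_aleph0 hV F (hF.trans Cardinal.natCast_lt_aleph0)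
  have hrank : LinearMap.rank (halfIntegral : L1 →ₗ[ℝ] C01) < n :=
    rank_halfIntegral_le_one.trans_lt (by exact_mod_cast hn)
  have hdist : ‖V - halfIntegral‖ = 1 / 2 :=
    (opNorm_sub_halfIntegral_le hV).antisymm (hlower _ hrank)
  refine IsLeast.csInf_eq ⟨⟨halfIntegral, hrank, hdist.symm⟩, ?_⟩
  rintro _ ⟨F, hF, rfl⟩
  exact hlower F hF
end
end

section
/- Let n ≥ 2 be a natural number. The n-th Gelfand number of the Volterra operator V : L¹(0,1) → C[0,1] equals 1/2, i.e., the infimum over all closed subspaces M of L¹(0,1) with codimension < n of sup{‖Vf‖_∞ : f ∈ M, ‖f‖₁ ≤ 1} equals 1/2. -/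
open MeasureTheory

noncomputable section

/-!
Lower bound: a closed subspace `M` of finite codimension cannot separate the `L¹`-normalised
bumps `u_k` on the disjoint intervals `(1/(k+2), 1/(k+1))`. Their images in the
finite-dimensional quotient `L¹/M` are bounded, so some `u_k - u_l` with `k < l` lies within `δ`
of an element `g ∈ M`. Then `‖g‖ ≤ 2 + δ` while `V g (1/(l+1))` is within `δ` of `-1`, so
`‖V g‖ / ‖g‖ ≥ (1 - δ) / (2 + δ)`.

Upper bound: on the hyperplane of mean-zero functions, `V f t = ∫₀ᵗ f = -∫ₜ¹ f`, so `|V f t|` is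
at most the smaller of `∫₀ᵗ |f|` and `∫ₜ¹ |f|`, hence at most `‖f‖ / 2`.
-/

open Set

theorem abs_setIntegral_le_half_integral_abs_of_integral_eq_zero {α : Type*}
    [MeasurableSpace α] {μ : Measure α} {f : α → ℝ} (hf : Integrable f μ)
    (h0 : ∫ x, f x ∂μ = 0) {s : Set α} (hs : MeasurableSet s) :
    |∫ x in s, f x ∂μ| ≤ (∫ x, |f x| ∂μ) / 2 := by
  have hsplit := integral_add_compl hs hf
  have hsplit_abs := integral_add_compl hs hf.abs
  have hcompl : |∫ x in s, f x ∂μ| = |∫ x in sᶜ, f x ∂μ| := by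
    rw [← abs_neg, show -∫ x in s, f x ∂μ = ∫ x in sᶜ, f x ∂μ by linarith]
  have := abs_integral_le_integral_abs (μ := μ.restrict s) (f := f)
  have := abs_integral_le_integral_abs (μ := μ.restrict sᶜ) (f := f)
  linarith

theorem Submodule.exists_lt_exists_mem_norm_sub_sub_lt {E : Type*} [NormedAddCommGroup E]
    [NormedSpace ℝ E] (M : Submodule ℝ E) [IsClosed (M : Set E)]
    [FiniteDimensional ℝ (E ⧸ M)] {x : ℕ → E} {C : ℝ} (hx : ∀ k, ‖x k‖ ≤ C)
    {δ : ℝ} (hδ : 0 < δ) : ∃ k l, k < l ∧ ∃ m ∈ M, ‖x k - x l - m‖ < δ := by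
  have hbdd : ∀ k, M.mkQ (x k) ∈ Metric.closedBall 0 C := fun k => by
    simpa using (Submodule.Quotient.norm_mk_le M (x k)).trans (hx k)
  obtain ⟨_, -, φ, hφ, hlim⟩ := tendsto_subseq_of_bounded Metric.isBounded_closedBall hbdd
  obtain ⟨N, hN⟩ := Metric.cauchySeq_iff'.mp (Filter.Tendsto.cauchySeq hlim) δ hδ
  have hclose : ‖M.mkQ (x (φ (N + 1)) - x (φ N))‖ < δ := by
    simpa [dist_eq_norm] using hN (N + 1) (by omega)
  obtain ⟨m', hm', hm'δ⟩ := QuotientAddGroup.norm_lt_iff.mp hclose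
  refine ⟨φ N, φ (N + 1), hφ (by omega), x (φ N) - x (φ (N + 1)) + m', ?_, ?_⟩
  · have hmk : Submodule.Quotient.mk (p := M) m' = Submodule.Quotient.mk _ := hm'
    convert (Submodule.Quotient.eq M).mp hmk using 1
    abel
  · simpa using hm'δ

theorem LinearMap.rank_quotient_ker_le_one {K E : Type*} [Field K] [AddCommGroup E]
    [Module K E] (φ : E →ₗ[K] K) : Module.rank K (E ⧸ LinearMap.ker φ) ≤ 1 := by
  have hrange : Module.rank K (LinearMap.range φ) ≤ 1 :=
    (Submodule.rank_le _).trans_eq (Module.rank_self K)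
  rw [← Cardinal.lift_le_one_iff, φ.quotKerEquivRange.lift_rank_eq]
  exact Cardinal.lift_le_one_iff.mpr hrange

theorem sSup_norm_apply_le {R E F : Type*} [Semiring R] [SeminormedAddCommGroup E]
    [Module R E] [Norm F] {T : E → F} {M : Submodule R E} {c : ℝ}
    (h : ∀ f ∈ M, ‖f‖ ≤ 1 → ‖T f‖ ≤ c) :
    sSup {s : ℝ | ∃ f : E, f ∈ M ∧ ‖f‖ ≤ 1 ∧ s = ‖T f‖} ≤ c := by
  refine csSup_le ⟨_, 0, M.zero_mem, by simp, rfl⟩ ?_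
  rintro _ ⟨f, hfM, hf, rfl⟩
  exact h f hfM hf

theorem le_sSup_norm_apply {𝕜 E F : Type*} [NontriviallyNormedField 𝕜]
    [SeminormedAddCommGroup E] [NormedSpace 𝕜 E] [SeminormedAddCommGroup F] [NormedSpace 𝕜 F]
    {T : E →L[𝕜] F} {M : Submodule 𝕜 E} {c : ℝ}
    (h : ∀ η > 0, ∃ f ∈ M, ‖f‖ ≤ 1 ∧ c - η ≤ ‖T f‖) :
    c ≤ sSup {s : ℝ | ∃ f : E, f ∈ M ∧ ‖f‖ ≤ 1 ∧ s = ‖T f‖} := by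
  have hbdd : BddAbove {s : ℝ | ∃ f : E, f ∈ M ∧ ‖f‖ ≤ 1 ∧ s = ‖T f‖} := by
    refine ⟨‖T‖, ?_⟩
    rintro _ ⟨f, -, hf, rfl⟩
    exact T.le_of_opNorm_le_of_le le_rfl hf |>.trans_eq (mul_one _)
  refine le_of_forall_sub_le fun η hη => ?_
  obtain ⟨f, hfM, hf, hTf⟩ := h η hη
  exact hTf.trans (le_csSup hbdd ⟨f, hfM, hf, rfl⟩)

local notation "μ₀₁" => Measure.restrict (volume : Measure ℝ) (Ioo (0:ℝ) 1)

def bump (a b : ℝ) : L1 :=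
  indicatorConstLp 1 measurableSet_Ioo (measure_ne_top μ₀₁ (Ioo a b)) (b - a)⁻¹

theorem measureReal_restrict_Ioo_eq_sub {a b : ℝ} (ha : 0 ≤ a) (hab : a < b) (hb : b ≤ 1) :
    Measure.real μ₀₁ (Ioo a b) = b - a := by
  rw [measureReal_restrict_apply measurableSet_Ioo,
    inter_eq_left.mpr (Ioo_subset_Ioo ha hb), Real.volume_real_Ioo_of_le hab.le]

theorem norm_bump {a b : ℝ} (ha : 0 ≤ a) (hab : a < b) (hb : b ≤ 1) : ‖bump a b‖ = 1 := by
  rw [bump, norm_indicatorConstLp one_ne_zero ENNReal.one_ne_top,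
    measureReal_restrict_Ioo_eq_sub ha hab hb, Real.norm_eq_abs, abs_inv,
    abs_of_pos (sub_pos.mpr hab)]
  simp [sub_pos.mpr hab |>.ne']

namespace IsVolterra

variable {V : L1 →L[ℝ] C01}

theorem apply_bump_of_le (hV : IsVolterra V) {a b : ℝ} (ha : 0 ≤ a) (hab : a < b) (hb : b ≤ 1)
    {t : Icc (0:ℝ) 1} (hbt : b ≤ t) : V (bump a b) t = 1 := by
  rw [hV _ t, bump, setIntegral_indicatorConstLp measurableSet_Ioo,
    inter_eq_left.mpr (Ioo_subset_Ioo ha hbt), measureReal_restrict_Ioo_eq_sub ha hab hb,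
    smul_eq_mul, mul_inv_cancel₀ (sub_pos.mpr hab).ne']

theorem apply_bump_of_ge (hV : IsVolterra V) {a b : ℝ} {t : Icc (0:ℝ) 1}
    (hta : (t : ℝ) ≤ a) : V (bump a b) t = 0 := by
  rw [hV _ t, bump, setIntegral_indicatorConstLp measurableSet_Ioo,
    (Ioo_disjoint_Ioo.mpr ((min_le_right _ _).trans (hta.trans (le_max_left _ _)))).inter_eq]
  simp

theorem abs_apply_le (hV : IsVolterra V) (f : L1) (t : Icc (0:ℝ) 1) : |V f t| ≤ ‖f‖ := by
  rw [← Real.norm_eq_abs, hV f t, L1.norm_eq_integral_norm]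
  calc ‖∫ s in Ioo 0 (t : ℝ), f s ∂μ₀₁‖ ≤ ∫ s in Ioo 0 (t : ℝ), ‖f s‖ ∂μ₀₁ :=
        norm_integral_le_integral_norm _
    _ ≤ ∫ s, ‖f s‖ ∂μ₀₁ := setIntegral_le_integral (L1.integrable_coeFn f).norm
        (Filter.Eventually.of_forall fun _ => norm_nonneg _)

theorem norm_apply_le_half_of_integral_eq_zero (hV : IsVolterra V) (f : L1)
    (hf : L1.integral f = 0) : ‖V f‖ ≤ ‖f‖ / 2 := by
  rw [L1.integral_eq_integral] at hf
  refine (ContinuousMap.norm_le _ (by positivity)).mpr fun t => ?_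
  rw [Real.norm_eq_abs, hV f t, L1.norm_eq_integral_norm]
  exact abs_setIntegral_le_half_integral_abs_of_integral_eq_zero (L1.integrable_coeFn f) hf
    measurableSet_Ioo

theorem exists_mem_norm_le_two_add_one_sub_le_norm_apply (hV : IsVolterra V)
    (M : Submodule ℝ L1) [IsClosed (M : Set L1)] [FiniteDimensional ℝ (L1 ⧸ M)] {δ : ℝ}
    (hδ : 0 < δ) : ∃ g ∈ M, ‖g‖ ≤ 2 + δ ∧ 1 - δ ≤ ‖V g‖ := by
  set a : ℕ → ℝ := fun k => 1 / (k + 2)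
  set b : ℕ → ℝ := fun k => 1 / (k + 1)
  have ha : ∀ k, 0 ≤ a k := fun k => by positivity
  have hab : ∀ k, a k < b k := fun k => one_div_lt_one_div_of_lt (by positivity) (by linarith)
  have hb : ∀ k, b k ≤ 1 := fun k => (div_le_one (by positivity)).mpr (by simp)
  have hba : ∀ k l, k < l → b l ≤ a k := fun k l hkl =>
    one_div_le_one_div_of_le (by positivity) (by
      have : (k : ℝ) + 1 ≤ l := by exact_mod_cast hkl
      linarith)
  have hx : ∀ k, ‖bump (a k) (b k)‖ = 1 := fun k => norm_bump (ha k) (hab k) (hb k)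
  obtain ⟨k, l, hkl, g, hgM, hg⟩ :=
    M.exists_lt_exists_mem_norm_sub_sub_lt (fun k => (hx k).le) hδ
  refine ⟨g, hgM, ?_, ?_⟩
  · calc ‖g‖ ≤ ‖bump (a k) (b k)‖ + ‖bump (a l) (b l)‖ + δ := by
          have := norm_sub_le (bump (a k) (b k) - bump (a l) (b l))
            (bump (a k) (b k) - bump (a l) (b l) - g)
          have := norm_sub_le (bump (a k) (b k)) (bump (a l) (b l))
          simp only [sub_sub_cancel] at *
          linarith
      _ = 2 + δ := by rw [hx, hx]; ring
  · set t : Icc (0:ℝ) 1 := ⟨b l, (ha l).trans (hab l).le, hb l⟩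
    have hkt : V (bump (a k) (b k)) t = 0 := hV.apply_bump_of_ge (hba k l hkl)
    have hlt : V (bump (a l) (b l)) t = 1 := hV.apply_bump_of_le (ha l) (hab l) (hb l) le_rfl
    have herr := (hV.abs_apply_le _ t).trans_lt hg
    simp only [map_sub, ContinuousMap.sub_apply, hkt, hlt] at herr
    calc 1 - δ ≤ |V g t| := by linarith [abs_lt.mp herr, neg_abs_le (V g t)]
      _ ≤ ‖V g‖ := by simpa using (V g).norm_coe_le_norm t

theorem one_half_le_sSup_norm_apply (hV : IsVolterra V) (M : Submodule ℝ L1)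
    [IsClosed (M : Set L1)] [FiniteDimensional ℝ (L1 ⧸ M)] :
    1 / 2 ≤ sSup {s : ℝ | ∃ f : L1, f ∈ M ∧ ‖f‖ ≤ 1 ∧ s = ‖V f‖} := by
  refine le_sSup_norm_apply fun η hη => ?_
  obtain ⟨g, hgM, hg, hVg⟩ := hV.exists_mem_norm_le_two_add_one_sub_le_norm_apply M hη
  have hpos : 0 < 2 + η := by positivity
  refine ⟨(2 + η)⁻¹ • g, M.smul_mem _ hgM, ?_, ?_⟩
  · rw [norm_smul, norm_inv, Real.norm_of_nonneg hpos.le, inv_mul_le_iff₀ hpos, mul_one]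
    exact hg
  · rw [map_smul, norm_smul, norm_inv, Real.norm_of_nonneg hpos.le, inv_mul_eq_div,
      le_div_iff₀ hpos]
    nlinarith

end IsVolterra

/-- The `n`-th Gelfand number of the Volterra operator `V : L¹(0,1) → C[0,1]`
equals `1/2` for `n ≥ 2`. -/
theorem gelfand_number_volterra (n : ℕ) (hn : 2 ≤ n)
    (V : L1 →L[ℝ] C01) (hV : IsVolterra V) :
    sInf {r : ℝ | ∃ M : Submodule ℝ L1, IsClosed (M : Set L1) ∧
        Module.rank ℝ (L1 ⧸ M) < (n : Cardinal) ∧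
        r = sSup {s : ℝ | ∃ f : L1, f ∈ M ∧ ‖f‖ ≤ 1 ∧ s = ‖V f‖}} = 1 / 2 := by
  have half_le : ∀ M : Submodule ℝ L1, IsClosed (M : Set L1) → Module.rank ℝ (L1 ⧸ M) < n →
      1 / 2 ≤ sSup {s : ℝ | ∃ f : L1, f ∈ M ∧ ‖f‖ ≤ 1 ∧ s = ‖V f‖} := fun M _ hrank => by
    have : FiniteDimensional ℝ (L1 ⧸ M) :=
      Module.rank_lt_aleph0_iff.mp (hrank.trans (Cardinal.natCast_lt_aleph0))
    exact hV.one_half_le_sSup_norm_apply M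
  let meanZero : Submodule ℝ L1 := LinearMap.ker (L1.integralCLM : L1 →L[ℝ] ℝ).toLinearMap
  have hclosed : IsClosed (meanZero : Set L1) := ContinuousLinearMap.isClosed_ker _
  have hrank : Module.rank ℝ (L1 ⧸ meanZero) < n :=
    (LinearMap.rank_quotient_ker_le_one _).trans_lt (by exact_mod_cast hn)
  have le_half : sSup {s : ℝ | ∃ f : L1, f ∈ meanZero ∧ ‖f‖ ≤ 1 ∧ s = ‖V f‖} ≤ 1 / 2 :=
    sSup_norm_apply_le fun f hf hf1 =>
      (hV.norm_apply_le_half_of_integral_eq_zero f ((L1.integral_eq f).trans hf)).trans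
        (by linarith)
  refine IsLeast.csInf_eq ⟨⟨meanZero, hclosed, hrank, le_antisymm (half_le _ hclosed hrank)
    le_half⟩, ?_⟩
  rintro _ ⟨M, hM, hrank, rfl⟩
  exact half_le M hM hrank
end
end

section
/- Let n ≥ 2 be a natural number. The n-th approximation number of the summation operator σ : ℓ¹ → c equals 1/2, i.e., the infimum of ‖σ − F‖ over all bounded linear operators F : ℓ¹ → c with rank F < n equals 1/2. -/
noncomputable section

/-- The space `ℓ¹` of absolutely summable real sequences. -/
abbrev ell1 : Type := lp (fun _ : ℕ => ℝ) 1

/-- The space `ℓ^∞` of bounded real sequences with the supremum norm. -/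
abbrev ellInf : Type := lp (fun _ : ℕ => ℝ) ⊤

/-- The subspace of `ℓ^∞` consisting of convergent sequences. -/
def convSubspace : Submodule ℝ ellInf where
  carrier := {x | ∃ L : ℝ, Filter.Tendsto (fun k => x k) Filter.atTop (nhds L)}
  add_mem' := by
    rintro x y ⟨L, hL⟩ ⟨M, hM⟩
    exact ⟨L + M, by simpa [lp.coeFn_add, Pi.add_apply] using hL.add hM⟩
  zero_mem' :=
    ⟨0, by simpa [lp.coeFn_zero] using
      (tendsto_const_nhds : Filter.Tendsto (fun _ : ℕ => (0:ℝ)) _ _)⟩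
  smul_mem' := by
    rintro c x ⟨L, hL⟩
    exact ⟨c * L, by simpa [lp.coeFn_smul, Pi.smul_apply, smul_eq_mul] using hL.const_mul c⟩

/-- The space `c` of convergent real sequences, normed by the supremum norm. -/
abbrev cSpace : Type := ↥convSubspace

/-- `σ` is the summation operator: `σ(x)ₖ = ∑_{j=1}^k x_j` (`0`-indexed here). -/
def IsSummation (σ : ell1 →L[ℝ] cSpace) : Prop :=
  ∀ x : ell1, ∀ k : ℕ, (↑(σ x) : ellInf) k = ∑ j ∈ Finset.range (k + 1), x j

/-!
The rank-one operator `x ↦ (½ ∑ⱼ xⱼ) • 𝟙` is within `1/2` of `σ`: a partial sum minus half the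
total sum is half the difference between head and tail, hence at most `‖x‖₁ / 2`.

Conversely, a compact (in particular a finite-rank) `F` sends the unit vectors `eⱼ` into a compact
set, so `F eⱼ` and `F eₖ` are arbitrarily close for some `j < k`. Since `σ (eⱼ - eₖ)` has `j`-th
coordinate `1` while `‖eⱼ - eₖ‖₁ = 2`, this forces `2 ‖σ - F‖ ≥ 1`.
-/

theorem IsCompact.exists_lt_dist_lt {X : Type*} [PseudoMetricSpace X] {K : Set X}
    (hK : IsCompact K) {u : ℕ → X} (hu : ∀ n, u n ∈ K) {ε : ℝ} (hε : 0 < ε) :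
    ∃ j k, j < k ∧ dist (u j) (u k) < ε := by
  obtain ⟨a, -, φ, hφ, hlim⟩ := hK.tendsto_subseq hu
  obtain ⟨N, hN⟩ := Metric.cauchySeq_iff.mp hlim.cauchySeq ε hε
  exact ⟨φ N, φ (N + 1), hφ N.lt_succ_self, hN N le_rfl (N + 1) N.le_succ⟩

theorem ContinuousLinearMap.isCompactOperator_of_rank_lt_aleph0 {𝕜 E F : Type*}
    [NontriviallyNormedField 𝕜] [LocallyCompactSpace 𝕜]
    [NormedAddCommGroup E] [NormedSpace 𝕜 E] [NormedAddCommGroup F] [NormedSpace 𝕜 F]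
    (T : E →L[𝕜] F) (hT : LinearMap.rank (T : E →ₗ[𝕜] F) < Cardinal.aleph0) :
    IsCompactOperator T := by
  have : FiniteDimensional 𝕜 (LinearMap.range (T : E →ₗ[𝕜] F)) :=
    Module.rank_lt_aleph0_iff.mp hT
  have := FiniteDimensional.proper 𝕜 (LinearMap.range (T : E →ₗ[𝕜] F))
  exact (isCompactOperator_of_locallyCompactSpace_dom
    (T.codRestrict _ (LinearMap.mem_range_self (T : E →ₗ[𝕜] F)))).continuous_comp
    continuous_subtype_val

theorem ContinuousLinearMap.rank_smulRight_le_one {𝕜 E F : Type*}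
    [NontriviallyNormedField 𝕜]
    [NormedAddCommGroup E] [NormedSpace 𝕜 E] [NormedAddCommGroup F] [NormedSpace 𝕜 F]
    (f : E →L[𝕜] 𝕜) (v : F) : LinearMap.rank (f.smulRight v : E →ₗ[𝕜] F) ≤ 1 := by
  have hrange : LinearMap.range (f.smulRight v : E →ₗ[𝕜] F) ≤ 𝕜 ∙ v := by
    rintro _ ⟨x, rfl⟩
    exact Submodule.smul_mem _ _ (Submodule.mem_span_singleton_self v)
  exact (Submodule.rank_mono hrange).trans
    ((rank_span_le {v}).trans_eq (Cardinal.mk_singleton v))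

theorem norm_sum_sub_half_tsum_le {ι E : Type*} [NormedAddCommGroup E] [NormedSpace ℝ E]
    [CompleteSpace E] {f : ι → E} (hf : Summable fun i => ‖f i‖) (s : Finset ι) :
    ‖∑ i ∈ s, f i - (1 / 2 : ℝ) • ∑' i, f i‖ ≤ 1 / 2 * ∑' i, ‖f i‖ := by
  rw [← hf.of_norm.sum_add_tsum_compl (s := s), ← hf.sum_add_tsum_compl (s := s)]
  have hsplit : ∑ i ∈ s, f i - (1 / 2 : ℝ) • (∑ i ∈ s, f i + ∑' i : ↑((s : Set ι)ᶜ), f i)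
      = (1 / 2 : ℝ) • (∑ i ∈ s, f i - ∑' i : ↑((s : Set ι)ᶜ), f i) := by
    module
  calc _ = 1 / 2 * ‖∑ i ∈ s, f i - ∑' i : ↑((s : Set ι)ᶜ), f i‖ := by
        rw [hsplit, norm_smul, Real.norm_of_nonneg (by norm_num)]
    _ ≤ 1 / 2 * (∑ i ∈ s, ‖f i‖ + ∑' i : ↑((s : Set ι)ᶜ), ‖f i‖) := by
        gcongr
        exact (norm_sub_le _ _).trans (add_le_add (norm_sum_le _ _)
          (norm_tsum_le_tsum_norm (hf.subtype _)))

namespace ell1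

theorem summable_norm (x : ell1) : Summable fun j => ‖x j‖ := by
  simpa using (lp.memℓp x).summable (by norm_num : (0 : ℝ) < (1 : ENNReal).toReal)

theorem norm_eq_tsum_norm (x : ell1) : ‖x‖ = ∑' j, ‖x j‖ := by
  simpa using lp.norm_eq_tsum_rpow (p := 1) (by norm_num) x

def tsumCLM : ell1 →L[ℝ] ℝ :=
  LinearMap.mkContinuous
    { toFun := fun x => ∑' j, x j
      map_add' := fun x y => by
        simpa using (summable_norm x).of_norm.tsum_add (summable_norm y).of_norm
      map_smul' := fun c x => by simpa using tsum_mul_left (a := c) (f := fun j => x j) }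
    1 fun x => by simpa [norm_eq_tsum_norm x] using norm_tsum_le_tsum_norm (summable_norm x)

theorem tsumCLM_apply (x : ell1) : tsumCLM x = ∑' j, x j := rfl

end ell1

def cSpace.const (a : ℝ) : cSpace :=
  ⟨⟨fun _ => a, memℓp_infty ⟨‖a‖, by rintro _ ⟨i, rfl⟩; rfl⟩⟩, ⟨a, tendsto_const_nhds⟩⟩

def halfSum : ell1 →L[ℝ] cSpace := ell1.tsumCLM.smulRight (cSpace.const (1 / 2))

theorem halfSum_apply (x : ell1) (k : ℕ) :
    ((halfSum x : cSpace) : ellInf) k = (1 / 2 : ℝ) • ∑' j, x j := by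
  simp [halfSum, ell1.tsumCLM_apply, cSpace.const, mul_comm]

namespace IsSummation

variable {σ : ell1 →L[ℝ] cSpace}

theorem norm_sub_halfSum_le (hσ : IsSummation σ) : ‖σ - halfSum‖ ≤ 1 / 2 := by
  refine ContinuousLinearMap.opNorm_le_bound _ (by norm_num) fun x => ?_
  refine lp.norm_le_of_forall_le (by positivity) fun k => ?_
  have := norm_sum_sub_half_tsum_le (ell1.summable_norm x) (Finset.range (k + 1))
  simpa [hσ x k, halfSum_apply, ell1.norm_eq_tsum_norm] using this

theorem apply_single_sub_single (hσ : IsSummation σ) {j k : ℕ} (hjk : j < k) :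
    ((σ (lp.single 1 j 1 - lp.single 1 k 1) : cSpace) : ellInf) j = 1 := by
  simp [hσ _ j, lp.single_apply, Pi.single_apply, hjk.not_ge]

theorem half_le_norm_sub_of_isCompactOperator (hσ : IsSummation σ) {F : ell1 →L[ℝ] cSpace}
    (hF : IsCompactOperator F) : 1 / 2 ≤ ‖σ - F‖ := by
  refine le_of_forall_pos_le_add fun ε hε => ?_
  obtain ⟨K, hK, hFK⟩ := hF.image_closedBall_subset_compact 1
  obtain ⟨j, k, hjk, hclose⟩ := hK.exists_lt_dist_lt
    (u := fun j => F (lp.single 1 j 1)) (fun j => hFK ⟨_, by simp [lp.norm_single], rfl⟩) hε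
  have hσx := hσ.apply_single_sub_single hjk
  set x : ell1 := lp.single 1 j 1 - lp.single 1 k 1
  have hx : ‖x‖ ≤ 2 := (norm_sub_le _ _).trans (by simp [lp.norm_single]; norm_num)
  have hFx : ‖F x‖ < ε := by rwa [map_sub, ← dist_eq_norm]
  have : 1 ≤ ‖σ - F‖ * 2 + ε := calc
    1 = ‖((σ - F) x : ellInf) j + (F x : ellInf) j‖ := by simp [hσx]
    _ ≤ ‖(σ - F) x‖ + ‖F x‖ := (norm_add_le _ _).trans <| add_le_add
      (lp.norm_apply_le_norm ENNReal.top_ne_zero _ j)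
      (lp.norm_apply_le_norm ENNReal.top_ne_zero _ j)
    _ ≤ ‖σ - F‖ * 2 + ε := add_le_add (((σ - F).le_opNorm x).trans (by gcongr)) hFx.le
  linarith

end IsSummation

/-- The `n`-th approximation number of the summation operator `σ : ℓ¹ → c`
equals `1/2` for `n ≥ 2`. -/
theorem approximation_number_summation (n : ℕ) (hn : 2 ≤ n)
    (σ : ell1 →L[ℝ] cSpace) (hσ : IsSummation σ) :
    sInf {r : ℝ | ∃ F : ell1 →L[ℝ] cSpace,
        LinearMap.rank (F : ell1 →ₗ[ℝ] cSpace) < (n : Cardinal) ∧ r = ‖σ - F‖} = 1 / 2 := by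
  have hcompact : ∀ F : ell1 →L[ℝ] cSpace, LinearMap.rank (F : ell1 →ₗ[ℝ] cSpace) < n →
      IsCompactOperator F := fun F hF =>
    F.isCompactOperator_of_rank_lt_aleph0 (hF.trans Cardinal.natCast_lt_aleph0)
  have hlt : LinearMap.rank (halfSum : ell1 →ₗ[ℝ] cSpace) < n :=
    (ContinuousLinearMap.rank_smulRight_le_one _ _).trans_lt (by exact_mod_cast hn)
  refine IsLeast.csInf_eq ⟨⟨halfSum, hlt, le_antisymm
    (hσ.half_le_norm_sub_of_isCompactOperator (hcompact _ hlt)) hσ.norm_sub_halfSum_le⟩, ?_⟩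
  rintro r ⟨F, hF, rfl⟩
  exact hσ.half_le_norm_sub_of_isCompactOperator (hcompact F hF)
end
end

section
/- Let n ≥ 2 be a natural number. The n-th Gelfand number of the summation operator σ : ℓ¹ → c equals 1/2, i.e., the infimum over all closed subspaces M of ℓ¹ with codimension < n of sup{‖σ(x)‖_∞ : x ∈ M, ‖x‖₁ ≤ 1} equals 1/2. -/
/-!
Upper bound: on the kernel of `x ↦ ∑ xⱼ`, a subspace of codimension one, every partial sum of `x`
is minus the corresponding tail, so it is bounded both by the head and by the tail of `‖x‖₁`,
hence by `‖x‖₁ / 2`.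

Lower bound: if `M` has finite codimension, the images of the unit vectors `eⱼ` in the
finite-dimensional space `ℓ¹ ⧸ M` have a convergent subsequence, so for some `i < j` the vector
`eᵢ - eⱼ` is arbitrarily close to `M`. It has norm `2`, while the `i`-th partial sum of
`σ (eᵢ - eⱼ)` is `1`.
-/

noncomputable section

open Filter Finset Topology

section OpNormOn

variable {E F : Type*} [SeminormedAddCommGroup E] [NormedSpace ℝ E]
  [SeminormedAddCommGroup F] [NormedSpace ℝ F]

/-- The norm of `T` restricted to `M`, in the form in which it enters the Gelfand numbers. -/
def opNormOn (T : E →L[ℝ] F) (M : Submodule ℝ E) : ℝ :=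
  sSup {s : ℝ | ∃ x : E, x ∈ M ∧ ‖x‖ ≤ 1 ∧ s = ‖T x‖}

variable (T : E →L[ℝ] F) (M : Submodule ℝ E)

lemma bddAbove_opNormOn_set : BddAbove {s : ℝ | ∃ x : E, x ∈ M ∧ ‖x‖ ≤ 1 ∧ s = ‖T x‖} := by
  refine ⟨‖T‖, ?_⟩
  rintro _ ⟨x, -, hx, rfl⟩
  exact T.le_of_opNorm_le_of_le le_rfl hx |>.trans_eq (mul_one _)

lemma opNormOn_nonneg : 0 ≤ opNormOn T M :=
  le_csSup (bddAbove_opNormOn_set T M) ⟨0, M.zero_mem, by simp, by simp⟩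

lemma opNormOn_le {C : ℝ} (hC : 0 ≤ C) (h : ∀ x ∈ M, ‖T x‖ ≤ C * ‖x‖) : opNormOn T M ≤ C := by
  refine csSup_le ⟨0, 0, M.zero_mem, by simp, by simp⟩ ?_
  rintro _ ⟨x, hxM, hx, rfl⟩
  exact (h x hxM).trans (mul_le_of_le_one_right hC hx)

lemma norm_apply_le_opNormOn_mul {x : E} (hx : x ∈ M) : ‖T x‖ ≤ opNormOn T M * ‖x‖ := by
  rcases eq_or_ne ‖x‖ 0 with hx0 | hx0
  · rw [hx0, mul_zero]
    exact (T.le_opNorm x).trans (by rw [hx0, mul_zero])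
  have hpos : 0 < ‖x‖ := (norm_nonneg x).lt_of_ne' hx0
  have hunit : ‖T (‖x‖⁻¹ • x)‖ ≤ opNormOn T M :=
    le_csSup (bddAbove_opNormOn_set T M)
      ⟨_, M.smul_mem _ hx, by rw [norm_smul, norm_inv, norm_norm, inv_mul_cancel₀ hx0], rfl⟩
  rwa [map_smul, norm_smul, norm_inv, norm_norm, inv_mul_le_iff₀ hpos, mul_comm] at hunit

/-- A vector `x` that lies within `ε` of `M` can be moved into `M` at the cost `ε` in norm and
`‖T‖ ε` in `‖T x‖`; letting `ε → 0` gives the bound. -/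
lemma le_opNormOn_mul_of_forall_norm_mkQ_lt {a b : ℝ}
    (h : ∀ ε > 0, ∃ x : E, ‖M.mkQ x‖ < ε ∧ ‖x‖ ≤ a ∧ b ≤ ‖T x‖) :
    b ≤ opNormOn T M * a := by
  have hε : ∀ ε > 0, b ≤ opNormOn T M * (a + ε) + ‖T‖ * ε := by
    intro ε hε
    obtain ⟨x, hxε, hxa, hbx⟩ := h ε hε
    obtain ⟨m, hm, hmε⟩ := Submodule.Quotient.norm_mk_lt (M.mkQ x) (sub_pos.2 hxε)
    rw [add_sub_cancel] at hmε
    have hxm : x - m ∈ M := (Submodule.Quotient.eq M).1 hm.symm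
    calc b ≤ ‖T x‖ := hbx
      _ ≤ ‖T (x - m)‖ + ‖T m‖ := by rw [map_sub]; exact norm_le_norm_sub_add _ _
      _ ≤ opNormOn T M * ‖x - m‖ + ‖T‖ * ε := by
          gcongr
          · exact norm_apply_le_opNormOn_mul T M hxm
          · exact (T.le_opNorm m).trans (by gcongr)
      _ ≤ opNormOn T M * (a + ε) + ‖T‖ * ε := by
          gcongr
          · exact opNormOn_nonneg T M
          · exact (norm_sub_le x m).trans (by linarith)
  have hlim : Tendsto (fun ε => opNormOn T M * (a + ε) + ‖T‖ * ε) (𝓝[>] 0)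
      (𝓝 (opNormOn T M * a)) := by
    have : Continuous fun ε => opNormOn T M * (a + ε) + ‖T‖ * ε := by fun_prop
    simpa using (this.tendsto 0).mono_left nhdsWithin_le_nhds
  exact ge_of_tendsto hlim (eventually_nhdsWithin_of_forall hε)

end OpNormOn

theorem exists_lt_dist_lt_of_isBounded_range {X : Type*} [PseudoMetricSpace X] [ProperSpace X]
    {u : ℕ → X} (hu : Bornology.IsBounded (Set.range u)) {ε : ℝ} (hε : 0 < ε) :
    ∃ i j, i < j ∧ dist (u i) (u j) < ε := by
  obtain ⟨_, _, φ, hφ, hlim⟩ := tendsto_subseq_of_bounded hu (Set.mem_range_self ·)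
  obtain ⟨N, hN⟩ := Metric.cauchySeq_iff.1 (Tendsto.cauchySeq hlim) ε hε
  exact ⟨φ N, φ (N + 1), hφ N.lt_succ_self, hN N le_rfl (N + 1) N.le_succ⟩

theorem norm_sum_range_le_half_of_hasSum_zero {E : Type*} [SeminormedAddCommGroup E]
    {f : ℕ → E} {s : ℝ} (hf : HasSum f 0) (hs : HasSum (‖f ·‖) s) (n : ℕ) :
    ‖∑ i ∈ range n, f i‖ ≤ s / 2 := by
  have head : ‖∑ i ∈ range n, f i‖ ≤ ∑ i ∈ range n, ‖f i‖ := norm_sum_le _ _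
  have tail : ‖∑ i ∈ range n, f i‖ ≤ s - ∑ i ∈ range n, ‖f i‖ := by
    rw [← norm_neg, ← zero_sub]
    exact ((hasSum_nat_add_iff' n).2 hf).norm_le_of_bounded ((hasSum_nat_add_iff' n).2 hs)
      fun _ => le_rfl
  linarith

theorem lp.hasSum_norm_one {α : Type*} {E : α → Type*} [∀ i, NormedAddCommGroup (E i)]
    (f : lp E 1) : HasSum (‖f ·‖) ‖f‖ := by
  simpa using lp.hasSum_norm (p := 1) (by norm_num) f

universe u in
lemma rank_quotient_ker_le_one {K V : Type u} [Field K] [AddCommGroup V] [Module K V]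
    (f : V →ₗ[K] K) : Module.rank K (V ⧸ LinearMap.ker f) ≤ 1 :=
  f.quotKerEquivRange.rank_eq ▸ (Submodule.rank_le _).trans_eq (Module.rank_self K)

lemma norm_cSpace_apply_le (y : cSpace) (k : ℕ) : ‖(y : ellInf) k‖ ≤ ‖y‖ :=
  lp.norm_apply_le_norm (by simp) _ k

section Summation

variable {σ : ell1 →L[ℝ] cSpace}

lemma IsSummation.opNormOn_ker_tsumCLM_le (hσ : IsSummation σ) :
    opNormOn σ (LinearMap.ker (lp.tsumCLM ℝ ℕ ℝ : ell1 →ₗ[ℝ] ℝ)) ≤ 1 / 2 := by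
  refine opNormOn_le σ _ (by norm_num) fun x hx => ?_
  rw [Submodule.coe_norm]
  refine lp.norm_le_of_forall_le (by positivity) fun k => ?_
  rw [hσ x k, one_div_mul_eq_div]
  have hsum : HasSum (x ·) 0 := by
    rw [← hx]; exact (lp.hasSum_norm_one x).summable.of_norm.hasSum
  exact norm_sum_range_le_half_of_hasSum_zero hsum (lp.hasSum_norm_one x) (k + 1)

lemma IsSummation.one_le_norm_single_sub_single (hσ : IsSummation σ) {i j : ℕ} (hij : i < j) :
    1 ≤ ‖σ (lp.single 1 i 1 - lp.single 1 j 1)‖ := by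
  refine le_of_eq_of_le ?_ (norm_cSpace_apply_le _ i)
  rw [hσ, lp.coeFn_sub, lp.coeFn_single, lp.coeFn_single]
  simp [Finset.sum_sub_distrib, Finset.sum_pi_single', hij.not_ge]

lemma IsSummation.half_le_opNormOn (hσ : IsSummation σ) (M : Submodule ℝ ell1)
    [IsClosed (M : Set ell1)] [FiniteDimensional ℝ (ell1 ⧸ M)] : 1 / 2 ≤ opNormOn σ M := by
  have hbdd : Bornology.IsBounded (Set.range fun i => M.mkQ (lp.single 1 i 1)) := by
    refine isBounded_iff_forall_norm_le.2 ⟨1, ?_⟩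
    rintro _ ⟨i, rfl⟩
    exact (Submodule.Quotient.norm_mk_le _ _).trans (by simp [lp.norm_single])
  suffices 1 ≤ opNormOn σ M * 2 by linarith
  refine le_opNormOn_mul_of_forall_norm_mkQ_lt σ M fun ε hε => ?_
  obtain ⟨i, j, hij, hdist⟩ := exists_lt_dist_lt_of_isBounded_range hbdd hε
  refine ⟨lp.single 1 i 1 - lp.single 1 j 1, ?_, ?_, hσ.one_le_norm_single_sub_single hij⟩
  · rwa [map_sub, ← dist_eq_norm]
  · exact (norm_sub_le _ _).trans (by simp [lp.norm_single]; norm_num)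

end Summation

/-- The `n`-th Gelfand number of the summation operator `σ : ℓ¹ → c`
equals `1/2` for `n ≥ 2`. -/
theorem gelfand_number_summation (n : ℕ) (hn : 2 ≤ n)
    (σ : ell1 →L[ℝ] cSpace) (hσ : IsSummation σ) :
    sInf {r : ℝ | ∃ M : Submodule ℝ ell1, IsClosed (M : Set ell1) ∧
        Module.rank ℝ (ell1 ⧸ M) < (n : Cardinal) ∧
        r = sSup {s : ℝ | ∃ x : ell1, x ∈ M ∧ ‖x‖ ≤ 1 ∧ s = ‖σ x‖}} = 1 / 2 := by
  set K := LinearMap.ker (lp.tsumCLM ℝ ℕ ℝ : ell1 →ₗ[ℝ] ℝ)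
  have lower : ∀ M : Submodule ℝ ell1, IsClosed (M : Set ell1) →
      Module.rank ℝ (ell1 ⧸ M) < n → 1 / 2 ≤ opNormOn σ M := by
    intro M hM hrank
    have : FiniteDimensional ℝ (ell1 ⧸ M) :=
      Module.rank_lt_aleph0_iff.1 (hrank.trans (Cardinal.natCast_lt_aleph0))
    exact hσ.half_le_opNormOn M
  have hK : IsClosed (K : Set ell1) := (lp.tsumCLM ℝ ℕ ℝ).isClosed_ker
  have hrankK : Module.rank ℝ (ell1 ⧸ K) < n :=
    (rank_quotient_ker_le_one _).trans_lt (by exact_mod_cast hn)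
  have hKeq : opNormOn σ K = 1 / 2 :=
    le_antisymm hσ.opNormOn_ker_tsumCLM_le (lower K hK hrankK)
  refine IsLeast.csInf_eq ⟨⟨K, hK, hrankK, hKeq.symm⟩, ?_⟩
  rintro _ ⟨M, hM, hrank, rfl⟩
  exact lower M hM hrank
end
end

section
/- Let n ≥ 2 be a natural number. The n-th Kolmogorov number of the summation operator σ : ℓ¹ → c equals 1/2, i.e., the infimum over all subspaces N of c with dimension < n of sup{inf{‖σ(x) − y‖_∞ : y ∈ N} : ‖x‖₁ ≤ 1} equals 1/2. -/
noncomputable section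

/-! For `‖x‖₁ ≤ 1` the partial sums of `x` oscillate by at most `1`, so `σ x` lies within `1/2`
of a constant sequence: the constants give `d_n(σ) ≤ 1/2` as soon as `n ≥ 2`.

Conversely, let `N` be finite-dimensional and suppose each `σ eⱼ = 𝟙_{[j,∞)}` is within `r` of
some `yⱼ ∈ N`. A subsequence of `(yⱼ)` converges in `N` to some `z`. Since `σ eⱼ` vanishes
before `j`, every coordinate of `z` has modulus at most `r`, hence so does `lim z`; since
`lim σ eⱼ = 1`, also `|1 - lim z| ≤ r`. Thus `1 ≤ 2r`. -/

open Filter Topology Metric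

section KolmogorovNumber

variable {E F : Type*} [NormedAddCommGroup E] [NormedSpace ℝ E]
  [NormedAddCommGroup F] [NormedSpace ℝ F]

def kolmogorovNumber (T : E →L[ℝ] F) (n : ℕ) : ℝ :=
  sInf {r : ℝ | ∃ N : Submodule ℝ F, Module.rank ℝ N < (n : Cardinal) ∧
    r = sSup {s : ℝ | ∃ x : E, ‖x‖ ≤ 1 ∧ s = infDist (T x) N}}

theorem sInf_norm_sub_eq_infDist (v : F) (N : Submodule ℝ F) :
    sInf {d : ℝ | ∃ y ∈ N, d = ‖v - y‖} = infDist v N := by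
  rw [infDist_eq_iInf, iInf]
  congr 1
  ext d
  simp [dist_eq_norm, eq_comm]

variable (T : E →L[ℝ] F) {n : ℕ}

theorem bddAbove_infDist_unitBall (N : Submodule ℝ F) :
    BddAbove {s : ℝ | ∃ x : E, ‖x‖ ≤ 1 ∧ s = infDist (T x) N} := by
  refine ⟨‖T‖, ?_⟩
  rintro s ⟨x, hx, rfl⟩
  calc infDist (T x) N ≤ dist (T x) 0 := infDist_le_dist_of_mem N.zero_mem
    _ = ‖T x‖ := dist_zero_right _
    _ ≤ ‖T‖ := T.unit_le_opNorm x hx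

theorem kolmogorovNumber_le (N : Submodule ℝ F) (hN : Module.rank ℝ N < (n : Cardinal))
    {r : ℝ} (h : ∀ x : E, ‖x‖ ≤ 1 → ∃ y ∈ N, ‖T x - y‖ ≤ r) :
    kolmogorovNumber T n ≤ r := by
  have hbdd : BddBelow {r : ℝ | ∃ N : Submodule ℝ F, Module.rank ℝ N < (n : Cardinal) ∧
      r = sSup {s : ℝ | ∃ x : E, ‖x‖ ≤ 1 ∧ s = infDist (T x) N}} := by
    refine ⟨0, ?_⟩
    rintro _ ⟨N, -, rfl⟩
    exact Real.sSup_nonneg fun s ⟨x, _, hs⟩ => hs ▸ infDist_nonneg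
  refine (csInf_le hbdd ⟨N, hN, rfl⟩).trans (csSup_le ⟨_, 0, by simp, rfl⟩ ?_)
  rintro s ⟨x, hx, rfl⟩
  obtain ⟨y, hy, hxy⟩ := h x hx
  exact (infDist_le_dist_of_mem hy).trans (by rwa [dist_eq_norm])

theorem le_kolmogorovNumber (hn : 0 < n) {r : ℝ}
    (h : ∀ (N : Submodule ℝ F) [FiniteDimensional ℝ N] (b : ℝ),
      (∀ x : E, ‖x‖ ≤ 1 → infDist (T x) N ≤ b) → r ≤ b) :
    r ≤ kolmogorovNumber T n := by
  refine le_csInf ⟨_, ⊥, by simpa using hn, rfl⟩ ?_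
  rintro _ ⟨N, hN, rfl⟩
  have : FiniteDimensional ℝ N :=
    Module.rank_lt_aleph0_iff.mp (hN.trans (Cardinal.natCast_lt_aleph0))
  refine (le_csSup_iff (bddAbove_infDist_unitBall T N) ⟨_, 0, by simp, rfl⟩).2 ?_
  intro b hb
  exact h N b fun x hx => hb ⟨x, hx, rfl⟩

end KolmogorovNumber

theorem exists_forall_abs_sub_le_half {ι : Type*} [Nonempty ι] {s : ι → ℝ} {d : ℝ}
    (h : ∀ i j, s i - s j ≤ d) : ∃ c, ∀ i, |s i - c| ≤ d / 2 := by
  obtain ⟨i₀⟩ := ‹Nonempty ι›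
  have hAbove : BddAbove (Set.range s) := ⟨s i₀ + d, by
    rintro _ ⟨i, rfl⟩; linarith [h i i₀]⟩
  have hBelow : BddBelow (Set.range s) := ⟨s i₀ - d, by
    rintro _ ⟨i, rfl⟩; linarith [h i₀ i]⟩
  have hosc : ⨆ i, s i ≤ (⨅ i, s i) + d :=
    ciSup_le fun i => by
      rw [← sub_le_iff_le_add]
      exact le_ciInf fun j => by linarith [h i j]
  refine ⟨((⨆ i, s i) + ⨅ i, s i) / 2, fun i => abs_le.2 ⟨?_, ?_⟩⟩
  · linarith [ciInf_le hBelow i]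
  · linarith [le_ciSup hAbove i]

namespace ell1

theorem sum_abs_le_norm (x : ell1) (s : Finset ℕ) : ∑ j ∈ s, |x j| ≤ ‖x‖ := by
  simpa using lp.sum_rpow_le_norm_rpow (p := 1) (by norm_num) x s

theorem abs_sum_range_sub_sum_range_le (x : ell1) {a b : ℕ} (hab : a ≤ b) :
    |∑ j ∈ Finset.range b, x j - ∑ j ∈ Finset.range a, x j| ≤ ‖x‖ := by
  rw [← Finset.sum_Ico_eq_sub _ hab]
  exact (Finset.abs_sum_le_sum_abs _ _).trans (sum_abs_le_norm x _)

def basisVec (j : ℕ) : ell1 := lp.single 1 j 1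

theorem norm_basisVec (j : ℕ) : ‖basisVec j‖ = 1 := by
  simp [basisVec, lp.norm_single (E := fun _ : ℕ => ℝ) (p := 1) zero_lt_one]

theorem sum_range_basisVec (j k : ℕ) :
    ∑ i ∈ Finset.range k, basisVec j i = if j < k then 1 else 0 := by
  simp [basisVec, lp.single_apply, Pi.single_apply]

end ell1

namespace cSpace

theorem abs_apply_le_norm (y : cSpace) (k : ℕ) : |(y : ellInf) k| ≤ ‖y‖ :=
  lp.norm_apply_le_norm ENNReal.top_ne_zero (y : ellInf) k

theorem continuous_apply (k : ℕ) : Continuous fun y : cSpace => (y : ellInf) k :=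
  (lp.lipschitzWith_one_eval ⊤ k).continuous.comp continuous_subtype_val

theorem coe_sub_apply (y z : cSpace) (k : ℕ) :
    ((y - z : cSpace) : ellInf) k = (y : ellInf) k - (z : ellInf) k := rfl

theorem coe_smul_apply (c : ℝ) (y : cSpace) (k : ℕ) :
    ((c • y : cSpace) : ellInf) k = c * (y : ellInf) k := rfl

def seqLim (y : cSpace) : ℝ := limUnder atTop fun k => (y : ellInf) k

theorem tendsto_seqLim (y : cSpace) :
    Tendsto (fun k => (y : ellInf) k) atTop (𝓝 (seqLim y)) :=
  tendsto_nhds_limUnder y.2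

theorem seqLim_eq_of_tendsto {y : cSpace} {L : ℝ}
    (h : Tendsto (fun k => (y : ellInf) k) atTop (𝓝 L)) : seqLim y = L :=
  tendsto_nhds_unique (tendsto_seqLim y) h

theorem abs_seqLim_le (y : cSpace) : |seqLim y| ≤ ‖y‖ :=
  le_of_tendsto (tendsto_seqLim y).abs (.of_forall (abs_apply_le_norm y))

def limCLM : cSpace →L[ℝ] ℝ :=
  LinearMap.mkContinuous
    { toFun := seqLim
      map_add' := fun y z => seqLim_eq_of_tendsto (by
        simpa using (tendsto_seqLim y).add (tendsto_seqLim z))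
      map_smul' := fun c y => seqLim_eq_of_tendsto (by
        simpa using (tendsto_seqLim y).const_mul c) }
    1 fun y => by simpa using abs_seqLim_le y

theorem limCLM_apply (y : cSpace) : limCLM y = seqLim y := rfl

end cSpace

open ell1 cSpace

section Summation

variable {σ : ell1 →L[ℝ] cSpace}

theorem IsSummation.apply_basisVec (hσ : IsSummation σ) (j k : ℕ) :
    (σ (basisVec j) : ellInf) k = if j ≤ k then 1 else 0 := by
  simp [hσ _ k, sum_range_basisVec]

theorem IsSummation.seqLim_basisVec (hσ : IsSummation σ) (j : ℕ) :
    seqLim (σ (basisVec j)) = 1 := by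
  refine seqLim_eq_of_tendsto (tendsto_const_nhds.congr' ?_)
  filter_upwards [eventually_ge_atTop j] with k hk
  simp [hσ.apply_basisVec, hk]

theorem IsSummation.exists_norm_sub_smul_le (hσ : IsSummation σ) (x : ell1) :
    ∃ c : ℝ, ‖σ x - c • σ (basisVec 0)‖ ≤ ‖x‖ / 2 := by
  have hosc : ∀ k l, (σ x : ellInf) k - (σ x : ellInf) l ≤ ‖x‖ := by
    intro k l
    simp only [hσ x]
    refine (le_abs_self _).trans ?_
    rcases le_total k l with hkl | hlk
    · rw [abs_sub_comm]
      exact abs_sum_range_sub_sum_range_le x (Nat.succ_le_succ hkl)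
    · exact abs_sum_range_sub_sum_range_le x (Nat.succ_le_succ hlk)
  obtain ⟨c, hc⟩ := exists_forall_abs_sub_le_half hosc
  refine ⟨c, lp.norm_le_of_forall_le (by positivity) fun k => ?_⟩
  show |((σ x - c • σ (basisVec 0) : cSpace) : ellInf) k| ≤ _
  rw [coe_sub_apply, coe_smul_apply, hσ.apply_basisVec, if_pos k.zero_le, mul_one]
  exact hc k

theorem IsSummation.half_le_of_forall_norm_sub_le (hσ : IsSummation σ) (N : Submodule ℝ cSpace)
    [FiniteDimensional ℝ N] {r : ℝ} (y : ℕ → N) (hy : ∀ j, ‖σ (basisVec j) - y j‖ ≤ r) :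
    1 / 2 ≤ r := by
  have hbdd : ∀ j, y j ∈ closedBall (0 : N) (‖σ‖ + r) := fun j => by
    rw [mem_closedBall_zero_iff]
    change ‖(y j : cSpace)‖ ≤ _
    exact (norm_le_insert _ _).trans
      (add_le_add (σ.unit_le_opNorm _ (norm_basisVec j).le) (hy j))
  obtain ⟨z, -, φ, hφ, hyz⟩ := tendsto_subseq_of_bounded isBounded_closedBall hbdd
  replace hyz : Tendsto (fun m => (y (φ m) : cSpace)) atTop (𝓝 (z : cSpace)) :=
    (continuous_subtype_val.tendsto z).comp hyz
  have hz_apply : ∀ k, |((z : cSpace) : ellInf) k| ≤ r := fun k => by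
    refine le_of_tendsto (((cSpace.continuous_apply k).tendsto _).comp hyz).abs ?_
    filter_upwards [hφ.tendsto_atTop.eventually_gt_atTop k] with m hm
    calc |((y (φ m) : cSpace) : ellInf) k|
        = |((σ (basisVec (φ m)) - y (φ m) : cSpace) : ellInf) k| := by
          rw [coe_sub_apply, hσ.apply_basisVec, if_neg (by omega), zero_sub, abs_neg]
      _ ≤ r := (abs_apply_le_norm _ k).trans (hy _)
  have hz_lim : |1 - seqLim z| ≤ r := by
    refine le_of_tendsto ((((limCLM.continuous.tendsto _).comp hyz).const_sub 1).abs)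
      (.of_forall fun m => ?_)
    calc |1 - limCLM (y (φ m))| = |limCLM (σ (basisVec (φ m)) - y (φ m))| := by
          simp only [map_sub, limCLM_apply, hσ.seqLim_basisVec]
      _ ≤ r := (abs_seqLim_le _).trans (hy _)
  have hz_lim' : |seqLim z| ≤ r :=
    le_of_tendsto (tendsto_seqLim z).abs (.of_forall hz_apply)
  linarith [le_abs_self (seqLim z), le_abs_self (1 - seqLim z)]

theorem IsSummation.half_le_of_forall_infDist_le (hσ : IsSummation σ) (N : Submodule ℝ cSpace)
    [FiniteDimensional ℝ N] {r : ℝ} (h : ∀ j, infDist (σ (basisVec j)) N ≤ r) : 1 / 2 ≤ r := by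
  refine le_of_forall_pos_le_add fun ε hε => ?_
  have hy : ∀ j, ∃ y ∈ N, dist (σ (basisVec j)) y < r + ε := fun j =>
    (infDist_lt_iff ⟨0, N.zero_mem⟩).1 ((h j).trans_lt (lt_add_of_pos_right r hε))
  choose y hyN hy using hy
  exact hσ.half_le_of_forall_norm_sub_le N (fun j => ⟨y j, hyN j⟩)
    fun j => (dist_eq_norm _ (y j) ▸ hy j).le

end Summation

/-- The `n`-th Kolmogorov number of the summation operator `σ : ℓ¹ → c`
equals `1/2` for `n ≥ 2`. -/
theorem kolmogorov_number_summation (n : ℕ) (hn : 2 ≤ n)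
    (σ : ell1 →L[ℝ] cSpace) (hσ : IsSummation σ) :
    sInf {r : ℝ | ∃ N : Submodule ℝ cSpace, Module.rank ℝ N < (n : Cardinal) ∧
        r = sSup {s : ℝ | ∃ x : ell1, ‖x‖ ≤ 1 ∧
          s = sInf {d : ℝ | ∃ y ∈ N, d = ‖σ x - y‖}}} = 1 / 2 := by
  simp_rw [sInf_norm_sub_eq_infDist]
  change kolmogorovNumber σ n = 1 / 2
  have hrank : Module.rank ℝ (ℝ ∙ σ (basisVec 0)) < n := by
    refine (rank_span_le _).trans_lt ?_
    rw [Cardinal.mk_singleton]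
    exact_mod_cast hn
  refine le_antisymm (kolmogorovNumber_le σ _ hrank fun x hx => ?_)
    (le_kolmogorovNumber σ (by omega) fun N _ b hb =>
      hσ.half_le_of_forall_infDist_le N fun j => hb _ (norm_basisVec j).le)
  obtain ⟨c, hc⟩ := hσ.exists_norm_sub_smul_le x
  exact ⟨c • σ (basisVec 0), Submodule.smul_mem _ c (Submodule.mem_span_singleton_self _),
    hc.trans (by linarith)⟩

end
end

section
/- Let n be a positive natural number. There exist a real Banach space E of dimension n and bounded linear operators A : c → E and B : E → ℓ¹ such that A ∘ σ ∘ B is the identity map on E and ‖A‖ · ‖B‖ ≤ 2n−1. (Consequently the n-th isomorphism number of σ satisfies i_n(σ) ≥ 1/(2n−1).) Concretely, one may take E = ℝⁿ with the maximum norm, A(x)_k = x_{2k−1} for 1 ≤ k ≤ n, and B(y) = (y₁, −y₁, y₂, −y₂, …, y_{n−1}, −y_{n−1}, y_n, 0, 0, …); then ‖A‖ = 1 and ‖B‖ = 2n−1. -/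
noncomputable section

/-!
For `y ∈ ℝⁿ` put `B y = (y₀, -y₀, y₁, -y₁, …, y_{n-1}, 0, 0, …)`. The partial sum of `B y` up to
index `2i` telescopes to `yᵢ`, so reading `σ (B y)` at the even indices recovers `y`. Reading
coordinates of a sup-normed sequence has norm `≤ 1`, while `B y` has `2n - 1` nonzero entries,
each of modulus `≤ ‖y‖∞`, so `‖B‖ ≤ 2n - 1`.
-/

open Finset

theorem sum_range_two_mul_add_one_neg_one_pow_mul_div_two {R : Type*} [CommRing R]
    (a : ℕ → R) (i : ℕ) : ∑ k ∈ range (2 * i + 1), (-1) ^ k * a (k / 2) = a i := by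
  induction i with
  | zero => simp
  | succ i ih =>
    rw [show 2 * (i + 1) + 1 = 2 * i + 1 + 1 + 1 by ring, sum_range_succ, sum_range_succ, ih,
      show (2 * i + 1) / 2 = i by omega, show (2 * i + 1 + 1) / 2 = i + 1 by omega]
    simp [pow_succ, pow_mul]

section Sampling

variable {ι : Type*}

def lpSampling (p : ENNReal) [Fact (1 ≤ p)] (f : ι → ℕ) : lp (fun _ : ℕ => ℝ) p →L[ℝ] (ι → ℝ) :=
  ContinuousLinearMap.pi fun i => lp.evalCLM ℝ (fun _ : ℕ => ℝ) p (f i)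

theorem norm_lpSampling_le {p : ENNReal} [Fact (1 ≤ p)] [Fintype ι] (f : ι → ℕ) :
    ‖lpSampling p f‖ ≤ 1 :=
  ContinuousLinearMap.opNorm_le_bound _ zero_le_one fun x =>
    (pi_norm_le_iff_of_nonneg (by positivity)).2 fun i => by
      rw [one_mul]; exact lp.norm_apply_le_norm (zero_lt_one.trans_le Fact.out).ne' x (f i)

end Sampling

section ExtendByZero

variable {m : ℕ}

def finExtendByZero (m : ℕ) : (Fin m → ℝ) →L[ℝ] ell1 :=
  ∑ j : Fin m, (lp.singleContinuousLinearMap ℝ (fun _ : ℕ => ℝ) 1 j).comp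
    (ContinuousLinearMap.proj j)

theorem finExtendByZero_apply_of_lt (v : Fin m → ℝ) {k : ℕ} (hk : k < m) :
    finExtendByZero m v k = v ⟨k, hk⟩ := by
  simp only [finExtendByZero, FunLike.coe_sum, Finset.sum_apply,
    ContinuousLinearMap.comp_apply, ContinuousLinearMap.proj_apply,
    lp.singleContinuousLinearMap_apply, lp.coeFn_sum, lp.coeFn_single]
  rw [sum_eq_single_of_mem ⟨k, hk⟩ (mem_univ _) fun c _ hc =>
    Pi.single_eq_of_ne (fun h => hc (Fin.ext h.symm)) _]
  exact Pi.single_eq_same _ _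

theorem norm_finExtendByZero_le : ‖finExtendByZero m‖ ≤ m := by
  refine ContinuousLinearMap.opNorm_le_bound _ m.cast_nonneg fun v => ?_
  calc ‖finExtendByZero m v‖ = ‖∑ j : Fin m, (lp.single 1 (j : ℕ) (v j) : ell1)‖ := by
        simp only [finExtendByZero, FunLike.coe_sum, Finset.sum_apply,
          ContinuousLinearMap.comp_apply, ContinuousLinearMap.proj_apply,
          lp.singleContinuousLinearMap_apply]
    _ ≤ ∑ j : Fin m, ‖(lp.single 1 (j : ℕ) (v j) : ell1)‖ :=
        norm_sum_le _ _
    _ ≤ ∑ _j : Fin m, ‖v‖ := by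
        gcongr with j
        rw [lp.norm_single (by norm_num)]
        exact norm_le_pi_norm v j
    _ = m * ‖v‖ := by simp

end ExtendByZero

section Construction

variable {n : ℕ}

def alternatingDuplication (n : ℕ) : (Fin n → ℝ) →L[ℝ] (Fin (2 * n - 1) → ℝ) :=
  ContinuousLinearMap.pi fun j =>
    (-1 : ℝ) ^ (j : ℕ) • ContinuousLinearMap.proj ⟨j / 2, by have := j.isLt; omega⟩

theorem alternatingDuplication_apply (y : Fin n → ℝ) (j : Fin (2 * n - 1)) :
    alternatingDuplication n y j = (-1) ^ (j : ℕ) * y ⟨j / 2, by have := j.isLt; omega⟩ :=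
  rfl

theorem norm_alternatingDuplication_le : ‖alternatingDuplication n‖ ≤ 1 :=
  ContinuousLinearMap.opNorm_le_bound _ zero_le_one fun y =>
    (pi_norm_le_iff_of_nonneg (by positivity)).2 fun j => by
      simpa [alternatingDuplication_apply] using norm_le_pi_norm y _

def evenCoordinates (n : ℕ) : cSpace →L[ℝ] (Fin n → ℝ) :=
  (lpSampling ⊤ fun i : Fin n => 2 * (i : ℕ)).comp convSubspace.subtypeL

def alternatingSpread (n : ℕ) : (Fin n → ℝ) →L[ℝ] ell1 :=
  (finExtendByZero (2 * n - 1)).comp (alternatingDuplication n)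

theorem norm_evenCoordinates_le : ‖evenCoordinates n‖ ≤ 1 :=
  (ContinuousLinearMap.opNorm_comp_le _ _).trans <|
    mul_le_one₀ (norm_lpSampling_le _) (ContinuousLinearMap.opNorm_nonneg _)
      (Submodule.norm_subtypeL_le _)

theorem norm_alternatingSpread_le (hn : 1 ≤ n) :
    ‖alternatingSpread n‖ ≤ 2 * n - 1 :=
  calc ‖alternatingSpread n‖
      ≤ ‖finExtendByZero (2 * n - 1)‖ * ‖alternatingDuplication n‖ :=
        ContinuousLinearMap.opNorm_comp_le _ _
    _ ≤ ((2 * n - 1 : ℕ) : ℝ) * 1 :=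
        mul_le_mul norm_finExtendByZero_le norm_alternatingDuplication_le (norm_nonneg _)
          (Nat.cast_nonneg _)
    _ = 2 * n - 1 := by push_cast [Nat.cast_sub (by omega : 1 ≤ 2 * n)]; ring

theorem sum_range_alternatingSpread (y : Fin n → ℝ) (i : Fin n) :
    ∑ k ∈ range (2 * i + 1), alternatingSpread n y k = y i := by
  let a : ℕ → ℝ := fun k => if h : k < n then y ⟨k, h⟩ else 0
  calc ∑ k ∈ range (2 * i + 1), alternatingSpread n y k
      = ∑ k ∈ range (2 * i + 1), (-1) ^ k * a (k / 2) := sum_congr rfl fun k hk_mem => by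
        have hk : k < 2 * n - 1 := by have := i.isLt; rw [mem_range] at hk_mem; omega
        rw [alternatingSpread, ContinuousLinearMap.comp_apply, finExtendByZero_apply_of_lt _ hk,
          alternatingDuplication_apply]
        simp only [a, dif_pos (show k / 2 < n by omega)]
    _ = a i := sum_range_two_mul_add_one_neg_one_pow_mul_div_two a i
    _ = y i := dif_pos i.isLt

theorem evenCoordinates_comp_comp_alternatingSpread {σ : ell1 →L[ℝ] cSpace}
    (hσ : IsSummation σ) :
    (evenCoordinates n).comp (σ.comp (alternatingSpread n)) = ContinuousLinearMap.id ℝ _ :=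
  ContinuousLinearMap.ext fun y => funext fun i =>
    (hσ _ _).trans (sum_range_alternatingSpread y i)

end Construction

/-- Lower bound for the isomorphism numbers of the summation operator: there exist an
`n`-dimensional Banach space `E` and bounded operators `A : c → E`, `B : E → ℓ¹`
with `A ∘ σ ∘ B = id_E` and `‖A‖ ⬝ ‖B‖ ≤ 2n - 1`. -/
theorem isomorphism_factorization_summation (n : ℕ) (hn : 1 ≤ n)
    (σ : ell1 →L[ℝ] cSpace) (hσ : IsSummation σ) :
    ∃ (E : Type) (_ : NormedAddCommGroup E) (_ : NormedSpace ℝ E) (_ : CompleteSpace E),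
      Module.finrank ℝ E = n ∧
      ∃ (A : cSpace →L[ℝ] E) (B : E →L[ℝ] ell1),
        A.comp (σ.comp B) = ContinuousLinearMap.id ℝ E ∧ ‖A‖ * ‖B‖ ≤ 2 * n - 1 :=
  ⟨Fin n → ℝ, inferInstance, inferInstance, inferInstance, Module.finrank_fin_fun ℝ,
    evenCoordinates n, alternatingSpread n, evenCoordinates_comp_comp_alternatingSpread hσ,
    calc ‖evenCoordinates n‖ * ‖alternatingSpread n‖ ≤ 1 * (2 * n - 1) :=
          mul_le_mul norm_evenCoordinates_le (norm_alternatingSpread_le hn) (norm_nonneg _)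
            zero_le_one
      _ = 2 * n - 1 := one_mul _⟩
end
end

section
/- Let n ≥ 2 be a natural number and let N be any subspace of c with dimension < n. Then sup{inf{‖σ(x) − y‖_∞ : y ∈ N} : x ∈ ℓ¹, ‖x‖₁ ≤ 1} ≥ 1/2. (Consequently the n-th Kolmogorov number of σ satisfies d_n(σ) ≥ 1/2.) -/
noncomputable section

/-! If each `σ eₘ = 𝟙[m, ∞)` (`eₘ` the unit vectors of `ℓ¹`) lay within `r` of some `yₘ` in the
finite-dimensional `N`, the bounded `yₘ` would have a cluster point `w ∈ N ⊆ c`. Along the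
subsequence, the coordinates `k < m` give `|w k| ≤ r` for every `k`, hence `|lim w| ≤ r`, while the
coordinates `k ≥ m` give `|1 - lim w| ≤ r`; so `1 ≤ 2r`. -/

open Filter Topology

lemma le_of_eventually_le_of_frequently_lt_add {a : ℕ → ℝ} {q r : ℝ}
    (hq : ∀ᶠ m in atTop, q ≤ a m) (ha : ∀ ε > 0, ∃ᶠ m in atTop, a m < r + ε) : q ≤ r :=
  le_of_forall_pos_lt_add fun ε hε => by
    obtain ⟨m, ham, hqm⟩ := ((ha ε hε).and_eventually hq).exists
    exact hqm.trans_lt ham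

lemma exists_mem_frequently_norm_sub_lt {E : Type*} [NormedAddCommGroup E] [NormedSpace ℝ E]
    (N : Submodule ℝ E) [FiniteDimensional ℝ N] {z y : ℕ → E} {C r : ℝ}
    (hz : ∀ m, ‖z m‖ ≤ C) (hy : ∀ m, y m ∈ N) (hzy : ∀ m, ‖z m - y m‖ ≤ r) :
    ∃ w ∈ N, ∀ ε > 0, ∃ᶠ m in atTop, ‖z m - w‖ < r + ε := by
  have hbdd : ∀ m, (⟨y m, hy m⟩ : N) ∈ Metric.closedBall 0 (C + r) := fun m => by
    rw [mem_closedBall_zero_iff, Submodule.coe_norm]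
    calc ‖y m‖ = ‖z m - (z m - y m)‖ := by rw [sub_sub_cancel]
      _ ≤ ‖z m‖ + ‖z m - y m‖ := norm_sub_le _ _
      _ ≤ C + r := add_le_add (hz m) (hzy m)
  obtain ⟨w, -, φ, hφ, hyw⟩ := tendsto_subseq_of_bounded Metric.isBounded_closedBall hbdd
  refine ⟨w, w.2, fun ε hε => hφ.tendsto_atTop.frequently (Eventually.frequently ?_)⟩
  filter_upwards [Metric.tendsto_nhds.mp hyw ε hε] with j hj
  rw [dist_eq_norm] at hj
  calc ‖z (φ j) - w‖ ≤ ‖z (φ j) - y (φ j)‖ + ‖y (φ j) - w‖ := norm_sub_le_norm_sub_add_norm_sub _ _ _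
    _ < r + ε := add_lt_add_of_le_of_lt (hzy _) hj

lemma cSpace.abs_apply_le_norm_s15 (z : cSpace) (k : ℕ) : |(z : ellInf) k| ≤ ‖z‖ :=
  lp.norm_apply_le_norm ENNReal.top_ne_zero (z : ellInf) k

lemma cSpace.sub_apply (z w : cSpace) (k : ℕ) :
    ((z - w : cSpace) : ellInf) k = (z : ellInf) k - (w : ellInf) k := rfl

section StepSequence

variable {z : ℕ → cSpace} (hz : ∀ m k, (z m : ellInf) k = if m ≤ k then 1 else 0)
include hz

lemma abs_apply_le_norm_step_sub (w : cSpace) {m k : ℕ} (hkm : k < m) :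
    |(w : ellInf) k| ≤ ‖z m - w‖ := by
  simpa [cSpace.sub_apply, hz, hkm.not_ge, abs_neg] using cSpace.abs_apply_le_norm_s15 (z m - w) k

lemma abs_one_sub_lim_le_norm_step_sub {w : cSpace} {L : ℝ}
    (hw : Tendsto (fun k => (w : ellInf) k) atTop (𝓝 L)) (m : ℕ) :
    |1 - L| ≤ ‖z m - w‖ := by
  refine le_of_tendsto ((tendsto_const_nhds.sub hw).abs) ?_
  filter_upwards [eventually_ge_atTop m] with k hmk
  simpa [cSpace.sub_apply, hz, hmk] using cSpace.abs_apply_le_norm_s15 (z m - w) k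

lemma half_le_of_frequently_norm_step_sub_lt (w : cSpace) {r : ℝ}
    (hw : ∀ ε > 0, ∃ᶠ m in atTop, ‖z m - w‖ < r + ε) : 1 / 2 ≤ r := by
  obtain ⟨L, hL⟩ := w.2
  have hwk : ∀ k, |(w : ellInf) k| ≤ r := fun k =>
    le_of_eventually_le_of_frequently_lt_add
      ((eventually_gt_atTop k).mono fun m hkm => abs_apply_le_norm_step_sub hz w hkm) hw
  have hLr : |L| ≤ r := le_of_tendsto' hL.abs hwk
  have h1Lr : |1 - L| ≤ r :=
    le_of_eventually_le_of_frequently_lt_add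
      (Eventually.of_forall (abs_one_sub_lim_le_norm_step_sub hz hL)) hw
  have : |L + (1 - L)| ≤ |L| + |1 - L| := abs_add_le _ _
  norm_num at this
  linarith

end StepSequence

lemma IsSummation.apply_single {σ : ell1 →L[ℝ] cSpace} (hσ : IsSummation σ) (m k : ℕ) :
    (σ (lp.single 1 m 1) : ellInf) k = if m ≤ k then 1 else 0 := by
  simp [hσ _ k, lp.single_apply, Finset.sum_pi_single']

lemma exists_mem_norm_apply_sub_lt_of_sSup_lt {E F : Type*} [SeminormedAddCommGroup E]
    [NormedSpace ℝ E] [SeminormedAddCommGroup F] [NormedSpace ℝ F] (T : E →L[ℝ] F)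
    (N : Submodule ℝ F) {x : E} (hx : ‖x‖ ≤ 1) {t : ℝ}
    (ht : sSup {s : ℝ | ∃ x : E, ‖x‖ ≤ 1 ∧ s = sInf {d : ℝ | ∃ y ∈ N, d = ‖T x - y‖}} < t) :
    ∃ y ∈ N, ‖T x - y‖ < t := by
  have hbdd : BddAbove {s : ℝ | ∃ x : E, ‖x‖ ≤ 1 ∧ s = sInf {d : ℝ | ∃ y ∈ N, d = ‖T x - y‖}} := by
    refine ⟨‖T‖, ?_⟩
    rintro _ ⟨x, hx, rfl⟩
    calc sInf {d : ℝ | ∃ y ∈ N, d = ‖T x - y‖} ≤ ‖T x - 0‖ :=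
          csInf_le ⟨0, by rintro _ ⟨y, -, rfl⟩; exact norm_nonneg _⟩ ⟨0, N.zero_mem, rfl⟩
      _ ≤ ‖T‖ := by rw [sub_zero]; exact T.unit_le_opNorm x hx
  obtain ⟨_, ⟨y, hy, rfl⟩, hyt⟩ := exists_lt_of_csInf_lt (s := {d : ℝ | ∃ y ∈ N, d = ‖T x - y‖})
    ⟨_, 0, N.zero_mem, rfl⟩
    ((le_csSup hbdd ⟨x, hx, rfl⟩).trans_lt ht)
  exact ⟨y, hy, hyt⟩

theorem kolmogorov_lower_bound_summation_general (n : ℕ)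
    (σ : ell1 →L[ℝ] cSpace) (hσ : IsSummation σ)
    (N : Submodule ℝ cSpace) (hN : Module.rank ℝ N < (n : Cardinal)) :
    1 / 2 ≤ sSup {s : ℝ | ∃ x : ell1, ‖x‖ ≤ 1 ∧
      s = sInf {d : ℝ | ∃ y ∈ N, d = ‖σ x - y‖}} := by
  have : Module.Free ℝ N := Module.Free.of_divisionRing ℝ N
  have : FiniteDimensional ℝ N :=
    Module.rank_lt_aleph0_iff.mp (hN.trans Cardinal.natCast_lt_aleph0)
  have hnorm : ∀ m, ‖(lp.single 1 m 1 : ell1)‖ = 1 := fun m => by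
    simp [lp.norm_single]
  refine le_of_forall_pos_le_add fun δ hδ => ?_
  choose y hyN hy using fun m => exists_mem_norm_apply_sub_lt_of_sSup_lt σ N (hnorm m).le
    (lt_add_of_pos_right _ hδ)
  obtain ⟨w, -, hw⟩ := exists_mem_frequently_norm_sub_lt N
    (fun m => σ.unit_le_opNorm _ (hnorm m).le) hyN fun m => (hy m).le
  exact half_le_of_frequently_norm_step_sub_lt hσ.apply_single w hw

/-- Lower bound for the Kolmogorov numbers of the summation operator: for any subspace
`N ⊆ c` with `dim N < n` (`n ≥ 2`), the deviation of `σ(B_{ℓ¹})` from `N` is `≥ 1/2`. -/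
theorem kolmogorov_lower_bound_summation (n : ℕ) (hn : 2 ≤ n)
    (σ : ell1 →L[ℝ] cSpace) (hσ : IsSummation σ)
    (N : Submodule ℝ cSpace) (hN : Module.rank ℝ N < (n : Cardinal)) :
    1 / 2 ≤ sSup {s : ℝ | ∃ x : ell1, ‖x‖ ≤ 1 ∧
      s = sInf {d : ℝ | ∃ y ∈ N, d = ‖σ x - y‖}} :=
  kolmogorov_lower_bound_summation_general n σ hσ N hN
end
end

section
/- There exists a bounded linear operator F : L¹(0,1) → C[0,1] of rank at most 1 such that ‖V − F‖ ≤ 1/2; namely F defined by (Ff)(t) = (1/2) ∫₀¹ f(s) ds for all t ∈ [0,1] satisfies ‖Vf − Ff‖_∞ ≤ (1/2)‖f‖₁ for every f ∈ L¹(0,1). (Consequently the n-th approximation number of V satisfies a_n(V) ≤ 1/2 for every n ≥ 2.) -/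
open MeasureTheory

noncomputable section

/-- The linear map `ℝ → C[0,1]` sending `c` to the constant function `(1/2) * c`. -/
def halfConst : ℝ →L[ℝ] C01 :=
  LinearMap.toContinuousLinearMap
    { toFun := fun c => ContinuousMap.const _ ((1 / 2) * c)
      map_add' := by intro a b; ext t; simp [mul_add]
      map_smul' := by intro a b; ext t; simp [smul_eq_mul]; ring }

/-- Upper bound for the approximation numbers of the Volterra operator: the rank-one
operator `F f ≡ (1/2)∫₀¹ f(s) ds` satisfies `‖Vf - Ff‖_∞ ≤ (1/2)‖f‖₁` for all `f`,
and hence `‖V - F‖ ≤ 1/2`. -/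
theorem approximation_upper_bound_volterra (V : L1 →L[ℝ] C01) (hV : IsVolterra V) :
    ∃ F : L1 →L[ℝ] C01,
      LinearMap.rank (F : L1 →ₗ[ℝ] C01) ≤ 1 ∧
      (∀ f : L1, ∀ t : Set.Icc (0:ℝ) 1,
        F f t = (1 / 2) * ∫ s, f s ∂((volume : Measure ℝ).restrict (Set.Ioo (0:ℝ) 1))) ∧
      (∀ f : L1, ‖V f - F f‖ ≤ (1 / 2) * ‖f‖) ∧
      ‖V - F‖ ≤ 1 / 2 := by
  set μ : Measure ℝ := (volume : Measure ℝ).restrict (Set.Ioo (0:ℝ) 1) with hμ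
  have hbound : ∀ f : L1, ‖V f - (halfConst.comp (L1.integralCLM)) f‖ ≤ (1/2) * ‖f‖ := by
    intro f
    have hf : Integrable (fun s => f s) μ := L1.integrable_coeFn f
    have hnorm : ‖f‖ = ∫ a, ‖f a‖ ∂μ := L1.norm_eq_integral_norm f
    refine (ContinuousMap.norm_le _ (by positivity)).mpr ?_
    intro t
    have hVt := hV f t
    have hFt : (halfConst.comp (L1.integralCLM)) f t = (1/2) * ∫ s, f s ∂μ := by
      show (1/2) * L1.integralCLM f = _
      rw [show L1.integralCLM f = L1.integral f from (L1.integral_eq f).symm,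
        L1.integral_eq_integral]
    have hs : MeasurableSet (Set.Ioo (0:ℝ) (t:ℝ)) := measurableSet_Ioo
    have hsplit : (∫ a in Set.Ioo (0:ℝ) (t:ℝ), f a ∂μ)
        + ∫ a in (Set.Ioo (0:ℝ) (t:ℝ))ᶜ, f a ∂μ = ∫ a, f a ∂μ :=
      integral_add_compl hs hf
    have hsplit' : (∫ a in Set.Ioo (0:ℝ) (t:ℝ), ‖f a‖ ∂μ)
        + ∫ a in (Set.Ioo (0:ℝ) (t:ℝ))ᶜ, ‖f a‖ ∂μ = ∫ a, ‖f a‖ ∂μ :=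
      integral_add_compl hs hf.norm
    rw [ContinuousMap.sub_apply, hVt, hFt]
    have key : (∫ a in Set.Ioo (0:ℝ) (t:ℝ), f a ∂μ) - (1/2) * ∫ a, f a ∂μ
        = (1/2) * ((∫ a in Set.Ioo (0:ℝ) (t:ℝ), f a ∂μ)
            - ∫ a in (Set.Ioo (0:ℝ) (t:ℝ))ᶜ, f a ∂μ) := by
      rw [← hsplit]; ring
    rw [Real.norm_eq_abs, key, abs_mul]
    have h1 : ‖∫ a in Set.Ioo (0:ℝ) (t:ℝ), f a ∂μ‖
        ≤ ∫ a in Set.Ioo (0:ℝ) (t:ℝ), ‖f a‖ ∂μ := norm_integral_le_integral_norm _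
    have h2 : ‖∫ a in (Set.Ioo (0:ℝ) (t:ℝ))ᶜ, f a ∂μ‖
        ≤ ∫ a in (Set.Ioo (0:ℝ) (t:ℝ))ᶜ, ‖f a‖ ∂μ := norm_integral_le_integral_norm _
    rw [Real.norm_eq_abs] at h1 h2
    have : |(∫ a in Set.Ioo (0:ℝ) (t:ℝ), f a ∂μ)
        - ∫ a in (Set.Ioo (0:ℝ) (t:ℝ))ᶜ, f a ∂μ| ≤ ∫ a, ‖f a‖ ∂μ := by
      calc _ ≤ |∫ a in Set.Ioo (0:ℝ) (t:ℝ), f a ∂μ|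
            + |∫ a in (Set.Ioo (0:ℝ) (t:ℝ))ᶜ, f a ∂μ| := abs_sub _ _
        _ ≤ _ := by rw [← hsplit']; exact add_le_add h1 h2
    calc |(1:ℝ)/2| * _ ≤ |(1:ℝ)/2| * ∫ a, ‖f a‖ ∂μ := by
          exact mul_le_mul_of_nonneg_left this (abs_nonneg _)
      _ = (1/2) * ‖f‖ := by rw [hnorm]; norm_num
  refine ⟨halfConst.comp (L1.integralCLM), ?_, ?_, ?_, ?_⟩
  · -- rank ≤ 1
    have hle : LinearMap.range ((halfConst.comp (L1.integralCLM) : L1 →L[ℝ] C01) : L1 →ₗ[ℝ] C01)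
        ≤ Submodule.span ℝ {ContinuousMap.const (Set.Icc (0:ℝ) 1) (1:ℝ)} := by
      rintro x ⟨f, rfl⟩
      have hx : (halfConst.comp (L1.integralCLM)) f
          = ((1/2) * L1.integralCLM f) • ContinuousMap.const (Set.Icc (0:ℝ) 1) (1:ℝ) := by
        ext t
        simp [halfConst]
      rw [show ((halfConst.comp (L1.integralCLM) : L1 →L[ℝ] C01) : L1 →ₗ[ℝ] C01) f
          = (halfConst.comp (L1.integralCLM)) f from rfl, hx]
      exact Submodule.smul_mem _ _ (Submodule.subset_span rfl)
    calc LinearMap.rank ((halfConst.comp (L1.integralCLM) : L1 →L[ℝ] C01) : L1 →ₗ[ℝ] C01)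
        ≤ Module.rank ℝ (Submodule.span ℝ {ContinuousMap.const (Set.Icc (0:ℝ) 1) (1:ℝ)}) :=
          Submodule.rank_mono hle
      _ ≤ _ := by simpa using rank_span_le (R := ℝ) {ContinuousMap.const (Set.Icc (0:ℝ) 1) (1:ℝ)}
  · intro f t
    show halfConst (L1.integralCLM f) t = _
    rw [show L1.integralCLM f = L1.integral f from (L1.integral_eq f).symm,
      L1.integral_eq_integral]
    rfl
  · exact hbound
  · -- operator norm bound
    refine ContinuousLinearMap.opNorm_le_bound _ (by norm_num) fun f => ?_
    rw [ContinuousLinearMap.sub_apply]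
    simpa using hbound f

end
end
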